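/- arXiv:2312.07907 — 2 statements merged into one kernel-verified Lean document; each statement's English description precedes it below -/
import Mathlib

section
/- Let G be a finite solvable group and let p, q, r be three distinct primes dividing the order of G. Then G contains an element whose order is the product of two of these primes. -/
/-!
Higman's argument. Induct on `|G|` and take a nontrivial normal abelian `s`-subgroup `N`. If `s`
is none of `p, q, r`, pass to `G ⧸ N`: the three primes still divide its order and elements of
order `a * b` lift. Otherwise say `s = p`. A Hall `{q, r}`-subgroup contains a nontrivial abelian
`q`-subgroup `A` (say) and an element `y` of order `r` normalizing it. If no element had order
`pq`, `pr` or `qr`, then `y` would fix no nontrivial element of `A`, while `A` and every element of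
order `r` would fix no nontrivial element of `N`. Hence every `a * y` (`a ∈ A`) has order `r`, for
`0 < i < r` the elements `(a * y) ^ i` run once through the coset `A * y ^ i`, and multiplying
the norms `∏ i < r, (a * y) ^ i • v = 1` over `a ∈ A` leaves `v ^ |A| = 1` for all `v ∈ N`:
impossible, since `N` is a nontrivial `p`-group and `|A|` a power of `q`.
-/

open Subgroup
open scoped IsMulCommutative

/-- Restricted to the primes dividing `Nat.card G`, this is the prime graph of `G`. -/
def primeGraph (G : Type*) [Group G] : SimpleGraph ℕ where
  Adj a b := a ≠ b ∧ ∃ g : G, orderOf g = a * b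
  symm := ⟨fun _ _ ⟨hab, g, hg⟩ => ⟨hab.symm, g, hg.trans (mul_comm _ _)⟩⟩
  loopless := ⟨fun _ h => h.1 rfl⟩

section PrimeGraph

variable {G : Type*} [Group G] [Finite G]

lemma exists_orderOf_eq_of_dvd_orderOf {g : G} {n : ℕ} (hn : n ∣ orderOf g) :
    ∃ x : G, orderOf x = n :=
  ⟨g ^ (orderOf g / n), orderOf_pow_orderOf_div (orderOf_pos g).ne' hn⟩

lemma primeGraph_le_of_surjective {H : Type*} [Group H] {f : G →* H}
    (hf : Function.Surjective f) : primeGraph H ≤ primeGraph G := by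
  rintro a b ⟨hab, h, hh⟩
  obtain ⟨g, rfl⟩ := hf h
  exact ⟨hab, exists_orderOf_eq_of_dvd_orderOf (hh ▸ orderOf_map_dvd f g)⟩

lemma primeGraph_adj_of_commute {x y : G} (hxy : Commute x y) {s t : ℕ} (hs : s.Prime)
    (ht : t.Prime) (hst : s ≠ t) (hx : s ∣ orderOf x) (hy : t ∣ orderOf y) :
    (primeGraph G).Adj s t := by
  have hxs := orderOf_pow_orderOf_div (orderOf_pos x).ne' hx
  have hyt := orderOf_pow_orderOf_div (orderOf_pos y).ne' hy
  refine ⟨hst, x ^ (orderOf x / s) * y ^ (orderOf y / t), ?_⟩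
  rw [(hxy.pow_pow _ _).orderOf_mul_eq_mul_orderOf_of_coprime
    (by rw [hxs, hyt]; exact (Nat.coprime_primes hs ht).2 hst), hxs, hyt]

end PrimeGraph

section NormalPGroup

variable {G : Type*} [Group G]

lemma IsPGroup.dvd_orderOf_of_mem {p : ℕ} [Fact p.Prime] {H : Subgroup G} (hH : IsPGroup p H)
    {g : G} (hg : g ∈ H) (hg1 : g ≠ 1) : p ∣ orderOf g := by
  simpa [orderOf_mk] using hH.dvd_orderOf (g := ⟨g, hg⟩) (by simpa using hg1)

lemma Subgroup.card_quotient_lt [Finite G] {N : Subgroup G} (hN : N ≠ ⊥) :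
    Nat.card (G ⧸ N) < Nat.card G := by
  rw [← N.card_mul_index, index_eq_card]
  exact lt_mul_of_one_lt_left Nat.card_pos ((one_lt_card_iff_ne_bot N).2 hN)

theorem Group.IsSolvable.exists_normal_isMulCommutative_ne_bot [Group.IsSolvable G]
    [Nontrivial G] : ∃ D : Subgroup G, D.Normal ∧ IsMulCommutative D ∧ D ≠ ⊥ := by
  classical
  have hsolv : ∃ n, derivedSeries G n = ⊥ := Group.IsSolvable.solvable
  obtain ⟨n, hn⟩ := Nat.exists_eq_add_one.mpr <| Nat.pos_of_ne_zero fun h0 =>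
    top_ne_bot (h0 ▸ Nat.find_spec hsolv : derivedSeries G 0 = ⊥)
  refine ⟨derivedSeries G n, derivedSeries_normal G n, ?_, Nat.find_min hsolv (by omega)⟩
  rw [← commutator_self_eq_bot_iff, ← derivedSeries_succ, ← hn]
  exact Nat.find_spec hsolv

theorem Group.IsSolvable.exists_normal_isPGroup [Finite G] [Group.IsSolvable G] [Nontrivial G] :
    ∃ (s : ℕ) (N : Subgroup G), s.Prime ∧ N.Normal ∧ IsMulCommutative N ∧ N ≠ ⊥ ∧
      IsPGroup s N := by
  obtain ⟨D, hD, hDcomm, hDbot⟩ := exists_normal_isMulCommutative_ne_bot (G := G)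
  obtain ⟨s, hs, hsD⟩ := Nat.exists_prime_and_dvd ((one_lt_card_iff_ne_bot D).2 hDbot).ne'
  have := Fact.mk hs
  let P : Sylow s D := default
  have := P.characteristic_of_normal (normal_of_isMulCommutative _)
  exact ⟨s, (P : Subgroup D).map D.subtype, hs, inferInstance, inferInstance,
    (map_eq_bot_iff_of_injective _ D.subtype_injective).not.2 (P.ne_bot_of_dvd_card hsD),
    P.isPGroup'.map _⟩

end NormalPGroup

section Hall

variable {G : Type*} [Group G]

def Subgroup.IsHall (π : Set ℕ) (K : Subgroup G) : Prop :=
  (∀ s, s.Prime → s ∣ Nat.card K → s ∈ π) ∧ ∀ s, s.Prime → s ∣ K.index → s ∉ π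

lemma QuotientGroup.card_comap_mk' [Finite G] (N : Subgroup G) [N.Normal]
    (K : Subgroup (G ⧸ N)) : Nat.card (K.comap (mk' N)) = Nat.card N * Nat.card K := by
  have hidx : (K.comap (mk' N)).index = K.index :=
    index_comap_of_surjective _ (QuotientGroup.mk'_surjective N)
  refine Nat.eq_of_mul_eq_mul_right (Nat.pos_of_ne_zero (index_ne_zero_of_finite (H := K))) ?_
  rw [← hidx, card_mul_index, hidx, mul_assoc, card_mul_index, ← index_eq_card, card_mul_index]

theorem Subgroup.exists_isHall [Finite G] [Group.IsSolvable G] (π : Set ℕ) :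
    ∃ K : Subgroup G, K.IsHall π := by
  induction h : Nat.card G using Nat.strong_induction_on generalizing G with
  | _ n ih =>
  subst h
  rcases subsingleton_or_nontrivial G with hG | hG
  · refine ⟨⊤, fun s hs hsK => ?_, fun s hs hsK => ?_⟩ <;>
      exact (hs.not_dvd_one (by simpa using hsK)).elim
  obtain ⟨s, N, hs, hN, -, hN1, hNs⟩ := Group.IsSolvable.exists_normal_isPGroup (G := G)
  have : Fact s.Prime := ⟨hs⟩
  obtain ⟨k, hk⟩ := IsPGroup.iff_card.mp hNs
  obtain ⟨K', hK'π, hK'π'⟩ := ih _ (card_quotient_lt hN1) rfl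
  set K := K'.comap (QuotientGroup.mk' N)
  have hNK : N ≤ K := by simpa using ker_le_comap (QuotientGroup.mk' N) K'
  have hKidx : K.index = K'.index := index_comap_of_surjective _ (QuotientGroup.mk'_surjective N)
  have hKcard : Nat.card K = Nat.card N * Nat.card K' := QuotientGroup.card_comap_mk' N K'
  by_cases hsπ : s ∈ π
  · refine ⟨K, fun t ht htK => ?_, by rwa [hKidx]⟩
    rw [hKcard, hk] at htK
    rcases ht.dvd_mul.mp htK with h | h
    · exact Nat.prime_eq_prime_of_dvd_pow ht hs h ▸ hsπ
    · exact hK'π t ht h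
  set N₁ := N.subgroupOf K
  have hN₁ : Nat.card N₁ = Nat.card N := Nat.card_congr (subgroupOfEquivOfLe hNK).toEquiv
  have hN₁idx : N₁.index = Nat.card K' := by
    have h := N₁.card_mul_index
    rw [hN₁, hKcard] at h
    exact Nat.eq_of_mul_eq_mul_left Nat.card_pos h
  have hcop : (Nat.card N₁).Coprime N₁.index := by
    rw [hN₁, hk, hN₁idx]
    exact Nat.Coprime.pow_left _ ((hs.coprime_iff_not_dvd).2 fun h => hsπ (hK'π s hs h))
  obtain ⟨H, hH⟩ := exists_right_complement'_of_coprime hcop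
  refine ⟨H.map K.subtype, fun t ht htH => ?_, fun t ht htH => ?_⟩
  · rw [card_map_of_injective K.subtype_injective, ← hH.symm.index_eq_card, hN₁idx] at htH
    exact hK'π t ht htH
  · rw [index_map_subtype, hH.index_eq_card, hN₁, hk, hKidx] at htH
    rcases ht.dvd_mul.mp htH with h | h
    · exact Nat.prime_eq_prime_of_dvd_pow ht hs h ▸ hsπ
    · exact hK'π' t ht h

end Hall

section Frobenius

variable {G : Type*} [Group G] {A : Subgroup G} {y : G}

lemma eq_of_pow_eq_pow_of_coprime {x z : G} {n i : ℕ} (hn : 1 < n) (hx : x ^ n = 1)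
    (hz : z ^ n = 1) (hi : i.Coprime n) (h : x ^ i = z ^ i) : x = z := by
  obtain ⟨j, -, hj⟩ := Nat.exists_mul_mod_eq_one_of_coprime hi hn
  calc x = x ^ (i * j % n) := by rw [hj, pow_one]
    _ = z ^ (i * j % n) := by
      rw [← pow_eq_pow_mod _ hx, ← pow_eq_pow_mod _ hz, pow_mul, pow_mul, h]
    _ = z := by rw [hj, pow_one]

lemma mul_pow_mul_inv_pow_mem (hy : y ∈ normalizer (A : Set G)) {a : G} (ha : a ∈ A) (n : ℕ) :
    (a * y) ^ n * (y ^ n)⁻¹ ∈ A := by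
  induction n with
  | zero => simp
  | succ n ih =>
    have h : (a * y) ^ (n + 1) * (y ^ (n + 1))⁻¹ =
        a * (y * ((a * y) ^ n * (y ^ n)⁻¹) * y⁻¹) := by
      group
    rw [h]
    exact A.mul_mem ha ((mem_normalizer_iff.mp hy _).mp ih)

variable [IsMulCommutative A] (hy : y ∈ normalizer (A : Set G))
  (hfix : ∀ c ∈ A, Commute y c → c = 1)
include hy hfix

lemma mul_pow_eq_one_of_pow_eq_one {n : ℕ} (hyn : y ^ n = 1) {a : G} (ha : a ∈ A) :
    (a * y) ^ n = 1 := by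
  have hc : (a * y) ^ n ∈ A := by simpa [hyn] using mul_pow_mul_inv_pow_mem hy ha n
  refine hfix _ hc ?_
  have hac : Commute a ((a * y) ^ n) := setLike_mul_comm ha hc
  have h : Commute (a⁻¹ * (a * y)) ((a * y) ^ n) := hac.inv_left.mul_left (Commute.self_pow _ _)
  simpa using h

lemma bijective_mul_pow_mul_inv_pow [Finite A] {n : ℕ} (hn : 1 < n) (hyn : y ^ n = 1) {i : ℕ}
    (hi : i.Coprime n) :
    Function.Bijective fun a : A =>
      (⟨(a * y) ^ i * (y ^ i)⁻¹, mul_pow_mul_inv_pow_mem hy a.2 i⟩ : A) := by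
  refine Finite.injective_iff_bijective.mp fun a b hab => Subtype.ext ?_
  have h : ((a : G) * y) ^ i = (b * y) ^ i := by simpa using congrArg Subtype.val hab
  simpa using eq_of_pow_eq_pow_of_coprime hn (mul_pow_eq_one_of_pow_eq_one hy hfix hyn a.2)
    (mul_pow_eq_one_of_pow_eq_one hy hfix hyn b.2) hi h

end Frobenius

section Norm

variable {G V : Type*} [Group G] [CommGroup V] (σ : G →* MulAut V)

lemma map_prod_range_pow_of_pow_eq_one {g : G} {n : ℕ} (hg : g ^ n = 1) (v : V) :
    σ g (∏ i ∈ Finset.range n, σ (g ^ i) v) = ∏ i ∈ Finset.range n, σ (g ^ i) v := by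
  have hshift : ∀ i, σ g (σ (g ^ i) v) = σ (g ^ (i + 1)) v := fun i => by
    rw [pow_succ', map_mul, MulAut.mul_apply]
  rw [map_prod]
  simp only [hshift]
  refine mul_right_cancel (b := σ (g ^ 0) v) ?_
  rw [← Finset.prod_range_succ' (fun i => σ (g ^ i) v), Finset.prod_range_succ, hg, pow_zero]

lemma map_prod_subgroup {H : Subgroup G} [Fintype H] {g : G} (hg : g ∈ H) (v : V) :
    σ g (∏ h : H, σ h v) = ∏ h : H, σ h v := by
  rw [map_prod]
  exact Fintype.prod_equiv (Equiv.mulLeft ⟨g, hg⟩) _ _ fun h => by simp [map_mul]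

theorem pow_card_eq_one_of_fixedPointFree {A : Subgroup G} [Finite A] [IsMulCommutative A]
    {y : G} {r : ℕ} (hr : r.Prime)
    (hy : y ∈ normalizer (A : Set G)) (hyr : orderOf y = r)
    (hfix : ∀ c ∈ A, Commute y c → c = 1)
    (hAV : ∀ v : V, (∀ a ∈ A, σ a v = v) → v = 1)
    (hrV : ∀ g : G, orderOf g = r → MonoidHom.FixedPointFree (σ g)) (v : V) :
    v ^ Nat.card A = 1 := by
  have := Fintype.ofFinite A
  have := Fact.mk hr
  have hyn : y ^ r = 1 := hyr ▸ pow_orderOf_eq_one y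
  have hay : ∀ a : A, orderOf (a * y) = r := fun a =>
    orderOf_eq_prime (mul_pow_eq_one_of_pow_eq_one hy hfix hyn a.2) fun h => by
      have hyA : y ∈ A := eq_inv_of_mul_eq_one_right h ▸ A.inv_mem a.2
      exact hr.one_lt.ne' (hyr ▸ orderOf_eq_one_iff.mpr (hfix y hyA (Commute.refl y)))
  have hcyc : ∀ a : A, ∏ i ∈ Finset.range r, σ ((a * y) ^ i) v = 1 := fun a =>
    hrV _ (hay a) _ (map_prod_range_pow_of_pow_eq_one σ (hay a ▸ pow_orderOf_eq_one _) v)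
  have hshift : ∀ i, i.Coprime r → ∏ a : A, σ ((a * y) ^ i) v = 1 := fun i hi =>
    calc ∏ a : A, σ ((a * y) ^ i) v
        = ∏ b : A, σ b (σ (y ^ i) v) :=
          Fintype.prod_bijective _ (bijective_mul_pow_mul_inv_pow hy hfix hr.one_lt hyn hi) _ _
            fun a => by rw [← MulAut.mul_apply, ← map_mul, inv_mul_cancel_right]
      _ = 1 := hAV _ fun a ha => map_prod_subgroup σ ha _
  obtain ⟨m, hm⟩ := Nat.exists_eq_add_one.mpr hr.pos
  calc v ^ Nat.card A = ∏ a : A, σ ((a * y) ^ 0) v := by simp [Nat.card_eq_fintype_card]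
    _ = ∏ i ∈ Finset.range r, ∏ a : A, σ ((a * y) ^ i) v := by
        rw [hm, Finset.prod_range_succ', Finset.prod_eq_one fun i hi => hshift (i + 1) ?_, one_mul]
        exact ((hr.coprime_iff_not_dvd).2
          (Nat.not_dvd_of_pos_of_lt i.succ_pos (by simp at hi; omega))).symm
    _ = ∏ a : A, ∏ i ∈ Finset.range r, σ ((a * y) ^ i) v := Finset.prod_comm
    _ = 1 := Finset.prod_eq_one fun a _ => hcyc a

end Norm

section Higman

variable {G : Type*} [Group G] [Finite G] {p q r : ℕ}

theorem not_isIndepSet_primeGraph_of_mem_normalizer (hp : p.Prime) (hq : q.Prime) (hr : r.Prime)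
    (hpq : p ≠ q) (hpr : p ≠ r) (hqr : q ≠ r)
    {V : Subgroup G} [V.Normal] [IsMulCommutative V] (hV : V ≠ ⊥) (hVp : IsPGroup p V)
    {A : Subgroup G} [IsMulCommutative A] (hA : A ≠ ⊥) (hAq : IsPGroup q A)
    {y : G} (hy : y ∈ normalizer (A : Set G)) (hyr : orderOf y = r) :
    ¬ (primeGraph G).IsIndepSet {p, q, r} := by
  intro hI
  have := Fact.mk hp
  have := Fact.mk hq
  let σ : G →* MulAut V := MulAut.conjNormal
  have hσ : ∀ g (v : V), σ g v = v → Commute g (v : G) := fun g v h => by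
    have h' := congrArg Subtype.val h
    rw [MulAut.conjNormal_apply] at h'
    exact mul_inv_eq_iff_eq_mul.mp h'
  have hVp' : ∀ v : V, v ≠ 1 → p ∣ orderOf (v : G) := fun v hv =>
    hVp.dvd_orderOf_of_mem v.2 (by simpa using hv)
  have hfix : ∀ c ∈ A, Commute y c → c = 1 := fun c hc hyc => by_contra fun hc1 =>
    hI (by simp) (by simp) hqr.symm
      (primeGraph_adj_of_commute hyc hr hq hqr.symm (hyr ▸ dvd_rfl)
        (hAq.dvd_orderOf_of_mem hc hc1))
  have hAV : ∀ v : V, (∀ a ∈ A, σ a v = v) → v = 1 := fun v hv => by_contra fun hv1 => by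
    obtain ⟨a, ha, ha1⟩ := A.bot_or_exists_ne_one.resolve_left hA
    exact hI (by simp) (by simp) hpq.symm (primeGraph_adj_of_commute (hσ a v (hv a ha)) hq hp
      hpq.symm (hAq.dvd_orderOf_of_mem ha ha1) (hVp' v hv1))
  have hrV : ∀ g : G, orderOf g = r → MonoidHom.FixedPointFree (σ g) := fun g hg v hv =>
    by_contra fun hv1 => hI (by simp) (by simp) hpr.symm
      (primeGraph_adj_of_commute (hσ g v hv) hr hp hpr.symm (hg ▸ dvd_rfl) (hVp' v hv1))
  obtain ⟨v, hv, hv1⟩ := V.bot_or_exists_ne_one.resolve_left hV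
  have hvA : (v : G) ^ Nat.card A = 1 := by
    simpa using congrArg Subtype.val
      (pow_card_eq_one_of_fixedPointFree σ hr hy hyr hfix hAV hrV ⟨v, hv⟩)
  obtain ⟨n, hn⟩ := IsPGroup.iff_card.mp hAq
  exact hpq (Nat.prime_eq_prime_of_dvd_pow hp hq
    ((hVp.dvd_orderOf_of_mem hv hv1).trans (hn ▸ orderOf_dvd_of_pow_eq_one hvA)))

theorem not_isIndepSet_primeGraph_of_normal_isPGroup [Group.IsSolvable G]
    (hp : p.Prime) (hq : q.Prime) (hr : r.Prime) (hpq : p ≠ q) (hpr : p ≠ r) (hqr : q ≠ r)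
    (hqd : q ∣ Nat.card G) (hrd : r ∣ Nat.card G)
    {V : Subgroup G} [V.Normal] [IsMulCommutative V] (hV : V ≠ ⊥) (hVp : IsPGroup p V) :
    ¬ (primeGraph G).IsIndepSet {p, q, r} := by
  obtain ⟨K, hKπ, hKπ'⟩ := Subgroup.exists_isHall (G := G) {q, r}
  have hdvdK : ∀ t ∈ ({q, r} : Set ℕ), t.Prime → t ∣ Nat.card G → t ∣ Nat.card K :=
    fun t ht htp htG =>
      (htp.dvd_mul.mp (K.card_mul_index ▸ htG)).resolve_right fun h => hKπ' t htp h ht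
  have hqK := hdvdK q (by simp) hq hqd
  have hrK := hdvdK r (by simp) hr hrd
  have : Nontrivial K := Finite.one_lt_card_iff_nontrivial.mp
    (hq.one_lt.trans_le (Nat.le_of_dvd Nat.card_pos hqK))
  obtain ⟨s, M, hs, hM, hMcomm, hM1, hMs⟩ := Group.IsSolvable.exists_normal_isPGroup (G := K)
  have := Fact.mk hs
  have hsK : s ∈ ({q, r} : Set ℕ) := hKπ s hs <|
    ((hMs.card_eq_or_dvd).resolve_left ((one_lt_card_iff_ne_bot M).2 hM1).ne').trans
      (card_subgroup_dvd_card M)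
  have key : ∀ {s t : ℕ}, s.Prime → t.Prime → p ≠ s → p ≠ t → s ≠ t → IsPGroup s M →
      t ∣ Nat.card K → ¬ (primeGraph G).IsIndepSet {p, s, t} := by
    intro s t hs ht hps hpt hst hMs htK
    have := Fact.mk ht
    obtain ⟨y, hy⟩ := exists_prime_orderOf_dvd_card' t htK
    refine not_isIndepSet_primeGraph_of_mem_normalizer hp hs ht hps hpt hst hV hVp
      (A := M.map K.subtype) ((map_eq_bot_iff_of_injective _ K.subtype_injective).not.2 hM1)
      (hMs.map _) (y := y) ?_ (by rw [orderOf_coe, hy])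
    exact le_normalizer_map K.subtype ⟨y, normalizer_eq_top_iff.mpr hM ▸ mem_top y, rfl⟩
  rcases hsK with rfl | rfl
  · exact key hq hr hpq hpr hqr hMs hrK
  · rw [Set.pair_comm]
    exact key hr hq hpr hpq hqr.symm hMs hqK

theorem Group.IsSolvable.not_isIndepSet_primeGraph [Group.IsSolvable G]
    (hp : p.Prime) (hq : q.Prime) (hr : r.Prime) (hpq : p ≠ q) (hpr : p ≠ r) (hqr : q ≠ r)
    (hpd : p ∣ Nat.card G) (hqd : q ∣ Nat.card G) (hrd : r ∣ Nat.card G) :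
    ¬ (primeGraph G).IsIndepSet {p, q, r} := by
  induction h : Nat.card G using Nat.strong_induction_on generalizing G with
  | _ n ih =>
  subst h
  have : Nontrivial G := Finite.one_lt_card_iff_nontrivial.mp
    (hp.one_lt.trans_le (Nat.le_of_dvd Nat.card_pos hpd))
  obtain ⟨s, N, hs, hN, hNcomm, hN1, hNs⟩ := exists_normal_isPGroup (G := G)
  by_cases hsp : s = p
  · subst hsp
    exact not_isIndepSet_primeGraph_of_normal_isPGroup hs hq hr hpq hpr hqr hqd hrd hN1 hNs
  by_cases hsq : s = q
  · subst hsq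
    rw [Set.insert_comm]
    exact not_isIndepSet_primeGraph_of_normal_isPGroup hs hp hr (Ne.symm hpq) hqr hpr hpd hrd
      hN1 hNs
  by_cases hsr : s = r
  · subst hsr
    rw [Set.pair_comm, Set.insert_comm]
    exact not_isIndepSet_primeGraph_of_normal_isPGroup hs hp hq (Ne.symm hpr) (Ne.symm hqr) hpq
      hpd hqd hN1 hNs
  have := Fact.mk hs
  obtain ⟨k, hk⟩ := IsPGroup.iff_card.mp hNs
  have hdvd : ∀ t, t.Prime → t ≠ s → t ∣ Nat.card G → t ∣ Nat.card (G ⧸ N) := by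
    intro t ht hts htG
    rw [← N.card_mul_index, hk] at htG
    exact (Nat.Coprime.pow_right k ((Nat.coprime_primes ht hs).2 hts)).dvd_of_dvd_mul_left htG
  intro hI
  exact ih _ (card_quotient_lt hN1) (hdvd p hp (Ne.symm hsp) hpd) (hdvd q hq (Ne.symm hsq) hqd)
    (hdvd r hr (Ne.symm hsr) hrd) rfl fun a ha b hb hab hadj => hI ha hb hab
      (primeGraph_le_of_surjective (QuotientGroup.mk'_surjective N) hadj)

end Higman

theorem higman_solvable_prime_graph (G : Type*) [Group G] [Finite G] [Group.IsSolvable G]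
    (p q r : ℕ) (hp : p.Prime) (hq : q.Prime) (hr : r.Prime)
    (hpq : p ≠ q) (hpr : p ≠ r) (hqr : q ≠ r)
    (hpd : p ∣ Nat.card G) (hqd : q ∣ Nat.card G) (hrd : r ∣ Nat.card G) :
    ∃ a b : ℕ, a ≠ b ∧ a ∈ ({p, q, r} : Set ℕ) ∧ b ∈ ({p, q, r} : Set ℕ) ∧
      ∃ g : G, orderOf g = a * b := by
  have h := Group.IsSolvable.not_isIndepSet_primeGraph hp hq hr hpq hpr hqr hpd hqd hrd
  simp only [SimpleGraph.isIndepSet_iff, Set.Pairwise, not_forall, not_not] at h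
  obtain ⟨a, ha, b, hb, hab, -, g, hg⟩ := h
  exact ⟨a, b, hab, ha, hb, g, hg⟩
end

section
/- Let G be a finite group, V a normal abelian p-subgroup of G for a prime p, and suppose G/V is a Frobenius group with kernel N and cyclic complement ⟨x⟩. If p does not divide |N| and the image of N in G/V is not contained in C_G(V)/V, then C_V(x) ≠ 1 and G contains an element of order p·|x|. -/
/-!
Write `m` for the order of `x`. If some preimage `g` of `x` has `g ^ m ≠ 1`, then `g ^ m` is a
nontrivial `p`-element of `V`; it commutes with `g`, hence with every preimage of `x` (they differ
from `g` by elements of the abelian group `V`), and `g` has order `m * p ^ (k + 1)`, so that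
`g ^ p ^ k` has order `p * m`.

Otherwise `(w * g) ^ m = 1` for all `w ∈ V`, which says that `∑ i < m, x ^ i` acts as zero on `V`
(written additively). Summing `n * x ^ i * n⁻¹` and `n * x ^ i` over `n ∈ N` and `i < m` gives
zero both times, and for `x ^ i ≠ 1` the two sums over `N` agree because the fixed-point-free
commutator map `n ↦ n * x ^ i * n⁻¹ * x ^ (-i)` permutes `N`. Comparing the terms `i = 0`,
`∑ n ∈ N, n` acts on `V` as multiplication by `|N|`, which is invertible on the `p`-group `V`;
hence every `n ∈ N` acts trivially on `V`, i.e. `N` centralizes `V`.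
-/

open Finset
open scoped IsMulCommutative

section FrobeniusSum

variable {F R : Type*} [Group F] (N : Subgroup F) [Fintype N]

theorem Subgroup.sum_conj_eq_sum_mul_of_fixedPointFree [N.Normal] {M : Type*} [AddCommMonoid M]
    {y : F} (hy : MonoidHom.FixedPointFree (MulAut.conjNormal y : MulAut N)) (f : F → M) :
    ∑ n : N, f (n * y * n⁻¹) = ∑ n : N, f (n * y) := by
  refine Fintype.sum_bijective _ ⟨hy.commutatorMap_injective, hy.commutatorMap_surjective⟩ _ _
    fun n => ?_
  simp [MulAut.conjNormal_apply, div_eq_mul_inv, mul_assoc]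

variable [Ring R] (ρ : F →* R)

theorem sum_eq_card_of_sum_pow_eq_zero [N.Normal] [Finite F] (z : F)
    (hz : ∀ y ∈ Subgroup.zpowers z, y ≠ 1 →
      MonoidHom.FixedPointFree (MulAut.conjNormal y : MulAut N))
    (hnorm : ∑ i ∈ range (orderOf z), ρ (z ^ i) = 0) :
    ∑ n : N, ρ n = Nat.card N := by
  obtain ⟨k, hk⟩ := Nat.exists_eq_add_one_of_ne_zero (orderOf_pos z).ne'
  have hconj : ∑ i ∈ range (orderOf z), ∑ n : N, ρ (n * z ^ i * n⁻¹) = 0 := by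
    rw [sum_comm]
    refine sum_eq_zero fun n _ => ?_
    simp only [map_mul, ← mul_sum, ← sum_mul, hnorm, mul_zero, zero_mul]
  have hmul : ∑ i ∈ range (orderOf z), ∑ n : N, ρ (n * z ^ i) = 0 := by
    rw [sum_comm]
    refine sum_eq_zero fun n _ => ?_
    simp only [map_mul, ← mul_sum, hnorm, mul_zero]
  have hagree : ∀ i < k, ∑ n : N, ρ (n * z ^ (i + 1) * n⁻¹) = ∑ n : N, ρ (n * z ^ (i + 1)) :=
    fun i hi => Subgroup.sum_conj_eq_sum_mul_of_fixedPointFree N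
      (hz _ (Subgroup.npow_mem_zpowers z _) (pow_ne_one_of_lt_orderOf i.succ_ne_zero (by omega))) _
  rw [hk, sum_range_succ', sum_congr rfl fun i hi => hagree i (mem_range.mp hi)] at hconj
  rw [hk, sum_range_succ'] at hmul
  simpa [← hmul] using hconj.symm

theorem map_eq_one_of_isUnit_sum (h : IsUnit (∑ n : N, ρ n)) {n : F} (hn : n ∈ N) : ρ n = 1 := by
  refine h.mul_eq_right.mp ?_
  rw [mul_sum]
  exact Fintype.sum_bijective (⟨n, hn⟩ * ·) (Group.mulLeft_bijective _) _ _ fun k => by simp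

end FrobeniusSum

theorem IsPGroup.isUnit_natCast_moduleEnd {p : ℕ} {A : Type*} [CommGroup A] (hA : IsPGroup p A)
    {n : ℕ} (hn : p.Coprime n) : IsUnit (n : Module.End ℤ (Additive A)) := by
  refine (Module.End.isUnit_iff _).mpr ?_
  convert (Additive.ofMul.bijective.comp (hA.powEquiv hn).bijective).comp Additive.toMul.bijective
  ext w
  simp [hA.powEquiv_apply]

theorem exists_orderOf_eq_prime_mul {G : Type*} [Group G] {p : ℕ} (hp : p.Prime) {g : G}
    {m k : ℕ} (hm : m ∣ orderOf g) (hg : g ^ m ≠ 1) (hk : orderOf (g ^ m) = p ^ k) :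
    ∃ h : G, orderOf h = p * m := by
  obtain ⟨k, rfl⟩ := Nat.exists_eq_add_one_of_ne_zero fun hk0 : k = 0 =>
    hg (by simpa [hk0] using hk)
  have hm0 : m ≠ 0 := by
    rintro rfl
    simp at hg
  have hord : orderOf g = p ^ k * (p * m) := by
    rw [orderOf_pow_of_dvd hm0 hm] at hk
    rw [← Nat.div_mul_cancel hm, hk]
    ring
  refine ⟨g ^ p ^ k, ?_⟩
  rw [orderOf_pow_of_dvd (pow_ne_zero k hp.ne_zero) (hord ▸ dvd_mul_right _ _), hord,
    Nat.mul_div_cancel_left _ (pow_pos hp.pos k)]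

namespace Subgroup

variable {G : Type*} [Group G] (V : Subgroup G) [V.Normal] [IsMulCommutative V]

noncomputable def quotientConjRep : Representation ℤ (G ⧸ V) (Additive V) :=
  QuotientGroup.lift V
    ((Representation.ofMulDistribMulAction (MulAut V) V).comp MulAut.conjNormal) fun v hv => by
      ext w
      simp [MulAut.conjNormal_apply, setLike_mul_comm hv w.toMul.2]

@[simp]
theorem quotientConjRep_mk_apply (g : G) (w : Additive V) :
    ((quotientConjRep V (g : G ⧸ V) w).toMul : G) = g * w.toMul * g⁻¹ :=
  rfl

theorem mul_pow_eq_sum_quotientConjRep_mul_pow (w : V) (g : G) (m : ℕ) :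
    ((w : G) * g) ^ m =
      ((∑ i ∈ range m, quotientConjRep V ((g : G ⧸ V) ^ i) (.ofMul w)).toMul : G) * g ^ m := by
  induction m with
  | zero => simp
  | succ m ih =>
    rw [pow_succ', ih, sum_range_succ', add_comm]
    simp only [pow_succ', map_mul, Module.End.mul_apply, ← map_sum, toMul_add, coe_mul,
      ← QuotientGroup.mk_pow, quotientConjRep_mk_apply, pow_zero, map_one, Module.End.one_apply,
      toMul_ofMul]
    group

theorem sum_quotientConjRep_pow_eq_zero [Finite G] (x : G ⧸ V)
    (hx : ∀ g : G, (g : G ⧸ V) = x → g ^ orderOf x = 1) :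
    ∑ i ∈ range (orderOf x), quotientConjRep V (x ^ i) = 0 := by
  obtain ⟨g, rfl⟩ := QuotientGroup.mk_surjective x
  ext w
  have hwg := mul_pow_eq_sum_quotientConjRep_mul_pow V w.toMul g (orderOf (g : G ⧸ V))
  rw [hx _ (by simp), hx g rfl, mul_one, ← LinearMap.sum_apply] at hwg
  rw [LinearMap.zero_apply, toMul_zero, OneMemClass.coe_one]
  exact hwg.symm

theorem conj_eq_conj_of_mk_eq {g g' v : G} (h : (g : G ⧸ V) = g') (hv : v ∈ V) :
    g * v * g⁻¹ = g' * v * g'⁻¹ :=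
  congr(((quotientConjRep V $h (.ofMul ⟨v, hv⟩)).toMul : G))

theorem ker_quotientConjRep_le :
    (quotientConjRep V).ker ≤ (centralizer (V : Set G)).map (QuotientGroup.mk' V) := by
  intro q hq
  obtain ⟨g, rfl⟩ := QuotientGroup.mk_surjective q
  refine ⟨g, mem_centralizer_iff.mpr fun v hv => ?_, rfl⟩
  have hconj := congr((($(MonoidHom.mem_ker.mp hq) (.ofMul ⟨v, hv⟩)).toMul : G))
  rw [quotientConjRep_mk_apply, Module.End.one_apply, toMul_ofMul, mul_inv_eq_iff_eq_mul] at hconj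
  exact hconj.symm

end Subgroup

theorem frobenius_quotient_fixed_points_general (G : Type*) [Group G] [Finite G]
    (p : ℕ) (hp : p.Prime) (V : Subgroup G) [V.Normal]
    (hVab : ∀ a b : G, a ∈ V → b ∈ V → a * b = b * a) (hVp : IsPGroup p V)
    (N : Subgroup (G ⧸ V)) [N.Normal] (x : G ⧸ V)
    -- G/V is a Frobenius group with kernel N and cyclic complement ⟨x⟩ :
    (hfpf : ∀ y ∈ Subgroup.zpowers x, y ≠ 1 →
      ∀ n ∈ N, y * n * y⁻¹ = n → n = 1)
    (hpN : ¬ p ∣ Nat.card N)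
    (hNC : ¬ N ≤ (Subgroup.centralizer (V : Set G)).map (QuotientGroup.mk' V)) :
    (∃ v : G, v ∈ V ∧ v ≠ 1 ∧
        ∀ g : G, QuotientGroup.mk' V g = x → g * v * g⁻¹ = v) ∧
      ∃ g : G, orderOf g = p * orderOf x := by
  have : IsMulCommutative V := ⟨⟨fun a b => Subtype.ext (hVab a b a.2 b.2)⟩⟩
  by_cases hlift : ∀ g : G, (g : G ⧸ V) = x → g ^ orderOf x = 1
  · have := Fintype.ofFinite N
    have hsum := sum_eq_card_of_sum_pow_eq_zero N V.quotientConjRep x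
      (fun y hy hy1 n hn => Subtype.ext (hfpf y hy hy1 n n.2 congr(($hn : G ⧸ V))))
      (V.sum_quotientConjRep_pow_eq_zero x hlift)
    have hunit : IsUnit (∑ n : N, V.quotientConjRep n) :=
      hsum ▸ hVp.isUnit_natCast_moduleEnd ((Nat.Prime.coprime_iff_not_dvd hp).mpr hpN)
    exact (hNC fun n hn => V.ker_quotientConjRep_le (map_eq_one_of_isUnit_sum N _ hunit hn)).elim
  · push Not at hlift
    obtain ⟨g, hgx, hgm⟩ := hlift
    have hgmV : g ^ orderOf x ∈ V := by
      rw [← QuotientGroup.eq_one_iff, QuotientGroup.mk_pow, hgx, pow_orderOf_eq_one]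
    have : Fact p.Prime := ⟨hp⟩
    obtain ⟨k, hk⟩ := IsPGroup.iff_orderOf.mp hVp ⟨_, hgmV⟩
    refine ⟨⟨_, hgmV, hgm, fun g' hg' => ?_⟩,
      exists_orderOf_eq_prime_mul hp (hgx ▸ orderOf_map_dvd (QuotientGroup.mk' V) g) hgm
        (by simpa using hk)⟩
    rw [← V.conj_eq_conj_of_mk_eq (hgx.trans hg'.symm) hgmV, (Commute.self_pow g _).mul_inv_cancel]

theorem frobenius_quotient_fixed_points (G : Type*) [Group G] [Finite G]
    (p : ℕ) (hp : p.Prime) (V : Subgroup G) [V.Normal]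
    (hVab : ∀ a b : G, a ∈ V → b ∈ V → a * b = b * a) (hVp : IsPGroup p V)
    (N : Subgroup (G ⧸ V)) [N.Normal] (x : G ⧸ V)
    -- G/V is a Frobenius group with kernel N and cyclic complement ⟨x⟩ :
    (hN : N ≠ ⊥) (hx : x ≠ 1)
    (hsup : N ⊔ Subgroup.zpowers x = ⊤)
    (hinf : N ⊓ Subgroup.zpowers x = ⊥)
    (hfpf : ∀ y ∈ Subgroup.zpowers x, y ≠ 1 →
      ∀ n ∈ N, y * n * y⁻¹ = n → n = 1)
    (hpN : ¬ p ∣ Nat.card N)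
    (hNC : ¬ N ≤ (Subgroup.centralizer (V : Set G)).map (QuotientGroup.mk' V)) :
    (∃ v : G, v ∈ V ∧ v ≠ 1 ∧
        ∀ g : G, QuotientGroup.mk' V g = x → g * v * g⁻¹ = v) ∧
      ∃ g : G, orderOf g = p * orderOf x :=
  frobenius_quotient_fixed_points_general G p hp V hVab hVp N x hfpf hpN hNC
end
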